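/- Let G be a variable-regular Tanner graph with variable degree d_v ≥ 2 and girth g with g/2 even. Suppose S is an (a,b) trapping set whose induced subgraph G(S) contains a check node w of degree k ≥ 2, and assume b < k(d_v − 1) + (k mod 2). Set b' = b − (k mod 2) and T = k(d_v − 1) − b'. Then a ≥ k + T · Σ_{i=0}^{g/4 − 2} (d_v − 1)^i. -/

import Mathlib

/-- Degree of a variable node `v` in the Tanner graph given by adjacency `adj`. -/
def varDeg {V C : Type*} [Fintype C] (adj : V → C → Prop) [∀ v c, Decidable (adj v c)] (v : V) : ℕ :=
  (Finset.univ.filter (fun c => adj v c)).card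

/-- Degree of a check node `c` in the subgraph induced by the set `S` of variable nodes. -/
def chkDeg {V C : Type*} [DecidableEq V] (adj : V → C → Prop) [∀ v c, Decidable (adj v c)]
    (S : Finset V) (c : C) : ℕ :=
  (S.filter (fun v => adj v c)).card

/-- The set of check nodes of odd degree in the subgraph induced by `S`. -/
def oddChks {V C : Type*} [DecidableEq V] [Fintype C] (adj : V → C → Prop) [∀ v c, Decidable (adj v c)]
    (S : Finset V) : Finset C :=
  Finset.univ.filter (fun c => Odd (chkDeg adj S c))

/-- The Tanner graph of the adjacency relation `adj`, as a simple graph on `V ⊕ C`. -/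
def tanner {V C : Type*} (adj : V → C → Prop) : SimpleGraph (V ⊕ C) where
  Adj x y := (∃ v c, x = Sum.inl v ∧ y = Sum.inr c ∧ adj v c) ∨
    (∃ v c, x = Sum.inr c ∧ y = Sum.inl v ∧ adj v c)
  symm := ⟨by
    rintro x y (⟨v, c, h1, h2, h3⟩ | ⟨v, c, h1, h2, h3⟩)
    · exact Or.inr ⟨v, c, h2, h1, h3⟩
    · exact Or.inl ⟨v, c, h2, h1, h3⟩⟩
  loopless := ⟨by
    rintro x (⟨v, c, h1, h2, _⟩ | ⟨v, c, h1, h2, _⟩) <;> subst h1 <;> simp at h2⟩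

/-!
Expand the subgraph `G(S)` induced by the trapping set as a tree rooted at the check node `w`,
and let `n t` be the number of variable nodes at depth `2 t + 1`, so `n 0 = k`. As long as
`4 (t + 2) ≤ g`, a path from `w` of length at most `2 t + 3` is determined by its endpoint (two
of them would close a cycle shorter than `g`). Hence every variable node of layer `t` has a
unique parent check and `d_v - 1` further checks; each of these either has degree one in `G(S)`,
and is then an odd check other than `w`, or leads to a variable node of layer `t + 1`, and
different edges lead to different nodes. So `(d_v - 1) n t ≤ n (t + 1) + ℓ t` where the `ℓ t`
count distinct odd checks, `∑ ℓ t ≤ b - k % 2`, and solving this recursion gives the bound.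
-/
namespace SimpleGraph.Walk

variable {α : Type*} {G : SimpleGraph α}

theorem IsPath.egirth_le_length_add_length {u v : α} {p q : G.Walk u v} (hp : p.IsPath)
    (hq : q.IsPath) (hne : p ≠ q) : G.egirth ≤ p.length + q.length := by
  classical
  set H := fromEdgeSet {e | e ∈ p.edges ∨ e ∈ q.edges}
  have hHG : H ≤ G := by
    rw [← edgeSet_subset_edgeSet, edgeSet_fromEdgeSet]
    rintro e ⟨he | he, -⟩
    exacts [p.edges_subset_edgeSet he, q.edges_subset_edgeSet he]
  have hpH : ∀ e ∈ p.edges, e ∈ H.edgeSet := fun e he => by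
    rw [edgeSet_fromEdgeSet]
    exact ⟨Or.inl he, G.not_isDiag_of_mem_edgeSet (p.edges_subset_edgeSet he)⟩
  have hqH : ∀ e ∈ q.edges, e ∈ H.edgeSet := fun e he => by
    rw [edgeSet_fromEdgeSet]
    exact ⟨Or.inr he, G.not_isDiag_of_mem_edgeSet (q.edges_subset_edgeSet he)⟩
  have hcyc : ¬ H.IsAcyclic := fun hH => hne <| by
    have := congrArg (fun r : H.Path u v => r.1.transfer G (fun e he =>
      edgeSet_mono hHG (r.1.edges_subset_edgeSet he)))
      ((hH.subsingleton_path u v).elim ⟨_, hp.transfer hpH⟩ ⟨_, hq.transfer hqH⟩)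
    simpa only [transfer_transfer, transfer_self] using this
  obtain ⟨x, c, hc⟩ : ∃ x, ∃ c : H.Walk x x, c.IsCycle := by
    simpa [IsAcyclic] using hcyc
  have hcH : c.edges ⊆ p.edges ++ q.edges := fun e he => by
    have := c.edges_subset_edgeSet he
    rw [edgeSet_fromEdgeSet] at this
    exact List.mem_append.mpr this.1
  calc G.egirth ≤ H.egirth := egirth_anti hHG
    _ ≤ c.length := egirth_le_length hc
    _ ≤ p.length + q.length := by
      have := (hc.isTrail.edges_nodup.subperm hcH).length_le
      simp only [length_edges, List.length_append] at this
      exact_mod_cast this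

theorem IsPath.concat_of_length_add_two_lt_egirth {u x y z : α} {r : G.Walk u x}
    {hxy : G.Adj x y} (hp : (r.concat hxy).IsPath) (hyz : G.Adj y z) (hzx : z ≠ x)
    (hlen : r.length + 2 < G.egirth) : ((r.concat hxy).concat hyz).IsPath := by
  classical
  refine hp.concat (fun hz => ?_) hyz
  have hr : r.IsPath ∧ y ∉ r.support := (concat_isPath_iff hxy).mp hp
  rw [support_concat, List.mem_append, List.mem_singleton] at hz
  rcases hz with hz | rfl
  · set d := r.dropUntil z hz
    have hd : (d.concat hxy).IsPath :=
      (hr.1.dropUntil hz).concat (fun hy => hr.2 (r.support_dropUntil_subset_support hz hy)) hxy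
    have hd0 : d.length ≠ 0 := fun h => hzx (eq_of_length_eq_zero h)
    have hne : d.concat hxy ≠ hyz.symm.toWalk := fun h => by
      simpa [hd0] using congrArg length h
    have hcyc := hd.egirth_le_length_add_length hyz.symm.isPath_toWalk hne
    have hdr : d.length ≤ r.length := r.length_dropUntil_le_length hz
    rw [length_concat, hyz.symm.length_toWalk] at hcyc
    have hdr' : ((d.length + 1 + 1 : ℕ) : ℕ∞) ≤ r.length + 2 := by norm_cast; omega
    exact (hcyc.trans (by exact_mod_cast hdr')).not_gt hlen
  · exact hyz.ne rfl

end SimpleGraph.Walk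

section Tanner

open SimpleGraph Walk Sum

variable {V C : Type*} {adj : V → C → Prop}

@[simp]
theorem tanner_adj_inl_inr {v : V} {c : C} : (tanner adj).Adj (inl v) (inr c) ↔ adj v c := by
  simp [tanner]

@[simp]
theorem tanner_adj_inr_inl {v : V} {c : C} : (tanner adj).Adj (inr c) (inl v) ↔ adj v c := by
  simp [tanner]

@[simp]
theorem not_tanner_adj_inl_inl {v v' : V} : ¬ (tanner adj).Adj (inl v) (inl v') := by
  simp [tanner]

/-- Paths that stay in the subgraph `G(S)` induced by `S`. -/
def IsPathIn (S : Finset V) {x y : V ⊕ C} (p : (tanner adj).Walk x y) : Prop :=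
  p.IsPath ∧ ∀ v : V, inl v ∈ p.support → v ∈ S

def IsPredecessor (adj : V → C → Prop) (S : Finset V) (o : V ⊕ C) (n : ℕ) (x y : V ⊕ C) :
    Prop :=
  ∃ (h : (tanner adj).Adj x y) (r : (tanner adj).Walk o x), r.length = n ∧ IsPathIn S (r.concat h)

open Classical in
/-- The variable nodes at depth `2 t + 1` when the subgraph induced by `S` is expanded as a tree
rooted at the check node `w`. -/
noncomputable def layer (adj : V → C → Prop) (S : Finset V) (w : C) (t : ℕ) : Finset V :=
  S.filter fun v => ∃ x, IsPredecessor adj S (inr w) (2 * t) x (inl v)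

open Classical in
noncomputable def leafChecks [Fintype C] [DecidableEq V] (adj : V → C → Prop)
    [∀ v c, Decidable (adj v c)] (S : Finset V) (w : C) (t : ℕ) : Finset C :=
  Finset.univ.filter fun c => chkDeg adj S c = 1 ∧ ∃ v ∈ layer adj S w t, adj v c

open Classical in
noncomputable def childChecks [Fintype C] (adj : V → C → Prop) (S : Finset V) (w : C) (t : ℕ)
    (v : V) : Finset C :=
  Finset.univ.filter fun c => adj v c ∧ ¬ IsPredecessor adj S (inr w) (2 * t) (inr c) (inl v)

noncomputable def childEdges [Fintype C] (adj : V → C → Prop) (S : Finset V) (w : C) (t : ℕ) :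
    Finset (Σ _ : V, C) :=
  (layer adj S w t).sigma (childChecks adj S w t)

variable {S : Finset V} {o : V ⊕ C} {w : C}

theorem IsPredecessor.eq {n m : ℕ} {x x' y : V ⊕ C} (hx : IsPredecessor adj S o n x y)
    (hx' : IsPredecessor adj S o m x' y) (hlen : n + m + 2 < (tanner adj).egirth) :
    n = m ∧ x = x' := by
  obtain ⟨h, r, rfl, hp, -⟩ := hx
  obtain ⟨h', r', rfl, hp', -⟩ := hx'
  by_contra hne
  have hrr' : r.concat h ≠ r'.concat h' := fun heq => hne <| by
    obtain ⟨rfl, hcopy⟩ := concat_inj heq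
    simp [← hcopy]
  have hcyc := hp.egirth_le_length_add_length hp' hrr'
  rw [length_concat, length_concat, Nat.cast_add, Nat.cast_add, Nat.cast_one,
    add_add_add_comm, one_add_one_eq_two] at hcyc
  exact hcyc.not_gt hlen

theorem IsPredecessor.extend {n : ℕ} {x y z : V ⊕ C} (hx : IsPredecessor adj S o n x y)
    (hyz : (tanner adj).Adj y z) (hzx : z ≠ x) (hzS : ∀ v, z = inl v → v ∈ S)
    (hlen : n + 2 < (tanner adj).egirth) : IsPredecessor adj S o (n + 1) y z := by
  obtain ⟨h, r, rfl, hp, hS⟩ := hx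
  refine ⟨hyz, r.concat h, length_concat r h, hp.concat_of_length_add_two_lt_egirth hyz hzx hlen,
    fun v hv => ?_⟩
  rw [support_concat, List.mem_append, List.mem_singleton] at hv
  exact hv.elim (hS v) fun h => hzS v h.symm

theorem mem_layer {t : ℕ} {v : V} :
    v ∈ layer adj S w t ↔ v ∈ S ∧ ∃ x, IsPredecessor adj S (inr w) (2 * t) x (inl v) := by
  classical
  simp [layer]

theorem disjoint_layer {s t : ℕ} (hst : s ≠ t)
    (hlen : 2 * s + 2 * t + 2 < (tanner adj).egirth) :
    Disjoint (layer adj S w s) (layer adj S w t) := by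
  refine Finset.disjoint_left.mpr fun v hs ht => hst ?_
  obtain ⟨-, x, hx⟩ := mem_layer.mp hs
  obtain ⟨-, x', hx'⟩ := mem_layer.mp ht
  have := (hx.eq hx' hlen).1
  omega

theorem sum_card_layer_le {P : ℕ} (hlen : 4 * P < (tanner adj).egirth) :
    ∑ t ∈ Finset.range (P + 1), (layer adj S w t).card ≤ S.card := by
  classical
  rw [← Finset.card_biUnion fun s hs t ht hst => disjoint_layer hst
    (lt_of_le_of_lt (by rw [Finset.mem_coe, Finset.mem_range] at hs ht; norm_cast; omega) hlen)]
  exact Finset.card_le_card (Finset.biUnion_subset.mpr fun t _ v hv => (mem_layer.mp hv).1)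

theorem mem_childEdges [Fintype C] {t : ℕ} {v : V} {c : C} :
    ⟨v, c⟩ ∈ childEdges adj S w t ↔ v ∈ layer adj S w t ∧ adj v c ∧
      ¬ IsPredecessor adj S (inr w) (2 * t) (inr c) (inl v) := by
  classical
  simp [childEdges, childChecks]

theorem isPredecessor_of_mem_childEdges [Fintype C] {t : ℕ} {v : V} {c : C}
    (he : ⟨v, c⟩ ∈ childEdges adj S w t) (hlen : 2 * t + 2 < (tanner adj).egirth) :
    IsPredecessor adj S (inr w) (2 * t + 1) (inl v) (inr c) := by
  obtain ⟨hv, hvc, hnot⟩ := mem_childEdges.mp he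
  obtain ⟨-, x, hx⟩ := mem_layer.mp hv
  exact hx.extend (tanner_adj_inl_inr.mpr hvc) (by rintro rfl; exact hnot hx) (by simp) hlen

variable [∀ v c, Decidable (adj v c)]

theorem layer_zero : layer adj S w 0 = S.filter (adj · w) := by
  ext v
  simp only [mem_layer, Finset.mem_filter, and_congr_right_iff]
  refine fun hv => ⟨fun ⟨x, h, r, hr, _⟩ => ?_, fun hvw => ?_⟩
  · obtain rfl := eq_of_length_eq_zero hr
    simpa using h
  · refine ⟨inr w, tanner_adj_inr_inl.mpr hvw, nil, rfl, IsPath.of_adj _, fun u hu => ?_⟩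
    simp_all

theorem eq_of_chkDeg_eq_one [DecidableEq V] {c : C} (hc : chkDeg adj S c = 1) {v v' : V}
    (hv : v ∈ S) (hv' : v' ∈ S) (hvc : adj v c) (hv'c : adj v' c) : v = v' := by
  obtain ⟨u, hu⟩ := Finset.card_eq_one.mp hc
  have hmem : ∀ x ∈ S, adj x c → x = u := fun x hx hxc => by
    have : x ∈ S.filter (adj · c) := Finset.mem_filter.mpr ⟨hx, hxc⟩
    simpa [chkDeg, hu] using this
  rw [hmem v hv hvc, hmem v' hv' hv'c]

theorem exists_ne_of_chkDeg_ne_one [DecidableEq V] {c : C} (hc : chkDeg adj S c ≠ 1) {v : V}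
    (hv : v ∈ S) (hvc : adj v c) : ∃ v' ∈ S, adj v' c ∧ v' ≠ v := by
  have hmem : v ∈ S.filter (adj · c) := Finset.mem_filter.mpr ⟨hv, hvc⟩
  obtain ⟨v', hv', hne⟩ := Finset.exists_mem_ne
    (lt_of_le_of_ne (Finset.card_pos.mpr ⟨v, hmem⟩) (Ne.symm hc)) v
  exact ⟨v', (Finset.mem_filter.mp hv').1, (Finset.mem_filter.mp hv').2, hne⟩

variable [Fintype C]

theorem varDeg_sub_one_le_card_childChecks {t : ℕ} {v : V} (hv : v ∈ layer adj S w t)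
    (hlen : 4 * t + 2 < (tanner adj).egirth) :
    varDeg adj v - 1 ≤ (childChecks adj S w t v).card := by
  classical
  obtain ⟨-, x, hx⟩ := mem_layer.mp hv
  obtain ⟨c₀, rfl⟩ : ∃ c₀, x = inr c₀ := by
    obtain ⟨h, -⟩ := hx
    cases x with
    | inl u => simp at h
    | inr c₀ => exact ⟨c₀, rfl⟩
  refine (Finset.pred_card_le_card_erase (a := c₀)).trans (Finset.card_le_card fun c hc => ?_)
  obtain ⟨hcc₀, hvc⟩ := Finset.mem_erase.mp hc
  simp only [childChecks, Finset.mem_filter, Finset.mem_univ, true_and]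
  refine ⟨(Finset.mem_filter.mp hvc).2, fun hc' => hcc₀ ?_⟩
  exact inr.inj (hc'.eq hx (lt_of_le_of_lt (by norm_cast; omega) hlen)).2

theorem le_card_childEdges {dv t : ℕ} (hdeg : ∀ v ∈ S, dv ≤ varDeg adj v)
    (hlen : 4 * t + 2 < (tanner adj).egirth) :
    (dv - 1) * (layer adj S w t).card ≤ (childEdges adj S w t).card := by
  rw [childEdges, Finset.card_sigma, mul_comm, ← smul_eq_mul, ← Finset.sum_const]
  refine Finset.sum_le_sum fun v hv => le_trans ?_ (varDeg_sub_one_le_card_childChecks hv hlen)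
  exact Nat.sub_le_sub_right (hdeg v (mem_layer.mp hv).1) 1

variable [DecidableEq V]

theorem mem_leafChecks {t : ℕ} {c : C} :
    c ∈ leafChecks adj S w t ↔ chkDeg adj S c = 1 ∧ ∃ v ∈ layer adj S w t, adj v c := by
  classical
  simp [leafChecks]

theorem disjoint_leafChecks {s t : ℕ} (hst : s ≠ t)
    (hlen : 2 * s + 2 * t + 2 < (tanner adj).egirth) :
    Disjoint (leafChecks adj S w s) (leafChecks adj S w t) := by
  refine Finset.disjoint_left.mpr fun c hs ht => ?_
  obtain ⟨hc, v, hv, hvc⟩ := mem_leafChecks.mp hs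
  obtain ⟨-, v', hv', hv'c⟩ := mem_leafChecks.mp ht
  obtain rfl := eq_of_chkDeg_eq_one hc (mem_layer.mp hv).1 (mem_layer.mp hv').1 hvc hv'c
  exact Finset.disjoint_left.mp (disjoint_layer hst hlen) hv hv'

theorem card_oddChks_erase [DecidableEq C] (c : C) :
    ((oddChks adj S).erase c).card = (oddChks adj S).card - chkDeg adj S c % 2 := by
  by_cases hc : c ∈ oddChks adj S
  · have : chkDeg adj S c % 2 = 1 := by simpa [oddChks, Nat.odd_iff] using hc
    rw [Finset.card_erase_of_mem hc, this]
  · have : chkDeg adj S c % 2 = 0 := by simpa [oddChks, Nat.odd_iff] using hc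
    rw [Finset.erase_eq_of_notMem hc, this, Nat.sub_zero]

theorem leafChecks_subset_erase [DecidableEq C] (hw : chkDeg adj S w ≠ 1) (t : ℕ) :
    leafChecks adj S w t ⊆ (oddChks adj S).erase w := fun c hc => by
  obtain ⟨hc1, -⟩ := mem_leafChecks.mp hc
  refine Finset.mem_erase.mpr ⟨by rintro rfl; exact hw hc1, ?_⟩
  simp [oddChks, hc1]

theorem sum_card_leafChecks_le (hw : chkDeg adj S w ≠ 1) {P : ℕ}
    (hlen : 4 * P < (tanner adj).egirth) :
    ∑ t ∈ Finset.range P, (leafChecks adj S w t).card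
      ≤ (oddChks adj S).card - chkDeg adj S w % 2 := by
  classical
  rw [← card_oddChks_erase, ← Finset.card_biUnion fun s hs t ht hst => disjoint_leafChecks hst
    (lt_of_le_of_lt (by rw [Finset.mem_coe, Finset.mem_range] at hs ht; norm_cast; omega) hlen)]
  exact Finset.card_le_card (Finset.biUnion_subset.mpr fun t _ => leafChecks_subset_erase hw t)

theorem card_filter_childEdges_leaf_le {t : ℕ} :
    ((childEdges adj S w t).filter fun e => chkDeg adj S e.2 = 1).card
      ≤ (leafChecks adj S w t).card := by
  refine Finset.card_le_card_of_injOn (·.2) (fun ⟨v, c⟩ he => ?_) fun ⟨v, c⟩ he ⟨v', c'⟩ he' h => ?_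
  · obtain ⟨he, hc⟩ := Finset.mem_filter.mp he
    obtain ⟨hv, hvc, -⟩ := mem_childEdges.mp he
    exact mem_leafChecks.mpr ⟨hc, v, hv, hvc⟩
  · obtain ⟨he, hc⟩ := Finset.mem_filter.mp he
    obtain ⟨hv, hvc, -⟩ := mem_childEdges.mp he
    obtain ⟨hv', hv'c, -⟩ := mem_childEdges.mp (Finset.mem_filter.mp he').1
    obtain rfl : c = c' := h
    obtain rfl := eq_of_chkDeg_eq_one hc (mem_layer.mp hv).1 (mem_layer.mp hv').1 hvc hv'c
    rfl

theorem card_filter_childEdges_not_leaf_le {t : ℕ} (hlen : 4 * t + 6 < (tanner adj).egirth) :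
    ((childEdges adj S w t).filter fun e => chkDeg adj S e.2 ≠ 1).card
      ≤ (layer adj S w (t + 1)).card := by
  have hlen' : 2 * t + 2 < (tanner adj).egirth := lt_of_le_of_lt (by norm_cast; omega) hlen
  refine Finset.card_le_card_of_forall_subsingleton
    (fun e v' => IsPredecessor adj S (inr w) (2 * t + 1 + 1) (inr e.2) (inl v'))
    (fun ⟨v, c⟩ he => ?_) fun v' _ ⟨v₁, c₁⟩ ⟨he₁, h₁⟩ ⟨v₂, c₂⟩ ⟨he₂, h₂⟩ => ?_
  · obtain ⟨he, hc⟩ := Finset.mem_filter.mp he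
    obtain ⟨hv, hvc, -⟩ := mem_childEdges.mp he
    obtain ⟨v', hv'S, hv'c, hv'v⟩ := exists_ne_of_chkDeg_ne_one hc (mem_layer.mp hv).1 hvc
    have hv' := (isPredecessor_of_mem_childEdges he hlen').extend (tanner_adj_inr_inl.mpr hv'c)
      (by simpa using hv'v) (fun u h => inl.inj h ▸ hv'S)
      (lt_of_le_of_lt (by norm_cast; omega) hlen)
    exact ⟨v', mem_layer.mpr ⟨hv'S, _, hv'⟩, hv'⟩
  · have hp₁ := isPredecessor_of_mem_childEdges (Finset.mem_filter.mp he₁).1 hlen'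
    have hp₂ := isPredecessor_of_mem_childEdges (Finset.mem_filter.mp he₂).1 hlen'
    obtain rfl : c₁ = c₂ := inr.inj (h₁.eq h₂ (lt_of_le_of_lt (by norm_cast; omega) hlen)).2
    obtain rfl : v₁ = v₂ := inl.inj (hp₁.eq hp₂ (lt_of_le_of_lt (by norm_cast; omega) hlen)).2
    rfl

theorem card_layer_mul_le {dv t : ℕ} (hdeg : ∀ v ∈ S, dv ≤ varDeg adj v)
    (hlen : 4 * t + 6 < (tanner adj).egirth) :
    (dv - 1) * (layer adj S w t).card
      ≤ (layer adj S w (t + 1)).card + (leafChecks adj S w t).card := by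
  calc (dv - 1) * (layer adj S w t).card
      ≤ (childEdges adj S w t).card :=
        le_card_childEdges hdeg (lt_of_le_of_lt (by norm_cast; omega) hlen)
    _ = ((childEdges adj S w t).filter fun e => chkDeg adj S e.2 = 1).card
          + ((childEdges adj S w t).filter fun e => chkDeg adj S e.2 ≠ 1).card :=
        (Finset.card_filter_add_card_filter_not _).symm
    _ ≤ (leafChecks adj S w t).card + (layer adj S w (t + 1)).card :=
        add_le_add card_filter_childEdges_leaf_le (card_filter_childEdges_not_leaf_le hlen)
    _ = _ := add_comm _ _

end Tanner

section Growth

variable {r P : ℕ} {n d : ℕ → ℕ}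

theorem pow_mul_le_of_growth (hr : 1 ≤ r) (hgrowth : ∀ t < P, r * n t ≤ n (t + 1) + d t) :
    ∀ t < P, r ^ (t + 1) * n 0 ≤ n (t + 1) + (∑ s ∈ Finset.range (t + 1), d s) * r ^ t := by
  intro t ht
  induction t with
  | zero => simpa using hgrowth 0 ht
  | succ t ih =>
    have hd : d (t + 1) ≤ d (t + 1) * r ^ (t + 1) := Nat.le_mul_of_pos_right _ (by positivity)
    calc r ^ (t + 1 + 1) * n 0 = r * (r ^ (t + 1) * n 0) := by ring
      _ ≤ r * (n (t + 1) + (∑ s ∈ Finset.range (t + 1), d s) * r ^ t) :=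
        Nat.mul_le_mul_left r (ih (by omega))
      _ = r * n (t + 1) + (∑ s ∈ Finset.range (t + 1), d s) * r ^ (t + 1) := by ring
      _ ≤ n (t + 1 + 1) + d (t + 1) * r ^ (t + 1)
            + (∑ s ∈ Finset.range (t + 1), d s) * r ^ (t + 1) := by
        have := hgrowth (t + 1) ht
        omega
      _ = n (t + 1 + 1) + (∑ s ∈ Finset.range (t + 1 + 1), d s) * r ^ (t + 1) := by
        rw [Finset.sum_range_succ _ (t + 1)]
        ring

theorem le_sum_of_growth {b : ℕ} (hr : 1 ≤ r) (hgrowth : ∀ t < P, r * n t ≤ n (t + 1) + d t)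
    (hd : ∑ t ∈ Finset.range P, d t ≤ b) :
    n 0 + (n 0 * r - b) * ∑ i ∈ Finset.range P, r ^ i ≤ ∑ t ∈ Finset.range (P + 1), n t := by
  rw [Finset.sum_range_succ', add_comm (n 0), Finset.mul_sum]
  refine Nat.add_le_add_right (Finset.sum_le_sum fun t ht => ?_) _
  have ht : t < P := Finset.mem_range.mp ht
  have hsum : ∑ s ∈ Finset.range (t + 1), d s ≤ b :=
    (Finset.sum_le_sum_of_subset (Finset.range_subset_range.mpr ht)).trans hd
  have := pow_mul_le_of_growth hr hgrowth t ht
  have := Nat.mul_le_mul_right (r ^ t) hsum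
  rw [Nat.sub_mul, tsub_le_iff_right]
  calc n 0 * r * r ^ t = r ^ (t + 1) * n 0 := by ring
    _ ≤ _ := by omega

end Growth

theorem ts_size_lower_bound_general {V C : Type*} [Fintype C] [DecidableEq V]
    (adj : V → C → Prop) [∀ v c, Decidable (adj v c)]
    (dv g : ℕ) (hdv : 2 ≤ dv) (hreg : ∀ v : V, varDeg adj v = dv)
    (hgirth : (tanner adj).egirth = (g : ℕ∞))
    (S : Finset V) (a b : ℕ) (ha : S.card = a) (hb : (oddChks adj S).card = b)
    (w : C) (k : ℕ) (hk : 2 ≤ k) (hw : chkDeg adj S w = k) :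
    k + (k * (dv - 1) - (b - k % 2)) * ∑ i ∈ Finset.range (g / 4 - 1), (dv - 1) ^ i
      ≤ a := by
  set P := g / 4 - 1
  have hg : 3 ≤ g := by exact_mod_cast hgirth ▸ (tanner adj).three_le_egirth
  have hlen : 4 * P < (tanner adj).egirth := by rw [hgirth]; exact_mod_cast (by omega : 4 * P < g)
  have hgrowth : ∀ t < P, (dv - 1) * (layer adj S w t).card
      ≤ (layer adj S w (t + 1)).card + (leafChecks adj S w t).card := fun t ht =>
    card_layer_mul_le (fun v _ => (hreg v).ge)
      (by rw [hgirth]; exact_mod_cast (by omega : 4 * t + 6 < g))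
  have hleaves := sum_card_leafChecks_le (by omega : chkDeg adj S w ≠ 1) hlen
  rw [hb, hw] at hleaves
  have hk0 : (layer adj S w 0).card = k := by rw [layer_zero]; exact hw
  calc k + (k * (dv - 1) - (b - k % 2)) * ∑ i ∈ Finset.range P, (dv - 1) ^ i
      ≤ ∑ t ∈ Finset.range (P + 1), (layer adj S w t).card :=
        by simpa only [hk0] using le_sum_of_growth (by omega) hgrowth hleaves
    _ ≤ a := ha ▸ sum_card_layer_le hlen

/-- Lower bound on the size of a trapping set containing a check node of
degree `k ≥ 2`, in a variable-regular Tanner graph of degree `dv` and girth `g` with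
`g/2` even: `a ≥ k + T · Σ_{i=0}^{g/4−2} (dv−1)^i`, where `b' = b − (k mod 2)` and
`T = k(dv−1) − b'`, assuming `b < k(dv−1) + (k mod 2)`. -/
theorem ts_size_lower_bound {V C : Type*} [Fintype C] [DecidableEq V]
    (adj : V → C → Prop) [∀ v c, Decidable (adj v c)]
    (dv g : ℕ) (hdv : 2 ≤ dv) (hreg : ∀ v : V, varDeg adj v = dv)
    (hg4 : 4 < g) (hgeven : Even g) (hg2even : Even (g / 2))
    (hgirth : (tanner adj).egirth = (g : ℕ∞))
    (S : Finset V) (a b : ℕ) (ha : S.card = a) (hb : (oddChks adj S).card = b)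
    (w : C) (k : ℕ) (hk : 2 ≤ k) (hw : chkDeg adj S w = k)
    (hbk : b < k * (dv - 1) + k % 2) :
    k + (k * (dv - 1) - (b - k % 2)) * ∑ i ∈ Finset.range (g / 4 - 1), (dv - 1) ^ i
      ≤ a :=
  ts_size_lower_bound_general adj dv g hdv hreg hgirth S a b ha hb w k hk hw
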